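/- Let F be a free group, u, v ∈ F_q elements of the q-th lower central series term, and I a multi-index of length q. Then the iterated augmented Fox derivative satisfies ε_I(uv) = ε_I(u) + ε_I(v). -/

import Mathlib

/-! Fox free differential calculus on the free group `F(n)`, with values in the
integral group ring `ℤF`. -/

/-- The integral group ring of the free group on `n` generators. -/
abbrev FreeGroupRing (n : ℕ) := MonoidAlgebra ℤ (FreeGroup (Fin n))

/-- Left multiplication by a group element, as an additive automorphism of `ℤF`. -/
noncomputable def lmulAut {n : ℕ} (g : FreeGroup (Fin n)) :
    FreeGroupRing n ≃+ FreeGroupRing n where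
  toFun a := MonoidAlgebra.of ℤ (FreeGroup (Fin n)) g * a
  invFun a := MonoidAlgebra.of ℤ (FreeGroup (Fin n)) g⁻¹ * a
  left_inv a := by
    show MonoidAlgebra.of ℤ (FreeGroup (Fin n)) g⁻¹ *
        (MonoidAlgebra.of ℤ (FreeGroup (Fin n)) g * a) = a
    rw [← mul_assoc, ← map_mul, inv_mul_cancel, map_one, one_mul]
  right_inv a := by
    show MonoidAlgebra.of ℤ (FreeGroup (Fin n)) g *
        (MonoidAlgebra.of ℤ (FreeGroup (Fin n)) g⁻¹ * a) = a
    rw [← mul_assoc, ← map_mul, mul_inv_cancel, map_one, one_mul]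
  map_add' a b := mul_add _ a b

/-- The action of `F(n)` on `ℤF` by left multiplication, as a homomorphism to the
multiplicative automorphisms of the (multiplicatively written) additive group `ℤF`. -/
noncomputable def foxAction (n : ℕ) :
    FreeGroup (Fin n) →* MulAut (Multiplicative (FreeGroupRing n)) where
  toFun g := AddEquiv.toMultiplicative (lmulAut g)
  map_one' := by
    refine MulEquiv.ext fun a => ?_
    show Multiplicative.ofAdd (MonoidAlgebra.single 1 1 * Multiplicative.toAdd a) = a
    simp [MonoidAlgebra.one_def.symm]
  map_mul' g h := by
    refine MulEquiv.ext fun a => ?_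
    show MonoidAlgebra.single (g * h) 1 * Multiplicative.toAdd a =
      MonoidAlgebra.single g 1 * (MonoidAlgebra.single h 1 * Multiplicative.toAdd a)
    rw [← mul_assoc, MonoidAlgebra.single_mul_single, mul_one]

/-- The homomorphism `F(n) → ℤF ⋊ F(n)` whose first component computes the `i`-th
Fox derivative: it sends `x_j` to `(δ_{ij}, x_j)`. -/
noncomputable def foxHom {n : ℕ} (i : Fin n) :
    FreeGroup (Fin n) →* SemidirectProduct (Multiplicative (FreeGroupRing n))
      (FreeGroup (Fin n)) (foxAction n) :=
  FreeGroup.lift fun j =>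
    ⟨Multiplicative.ofAdd (if j = i then (1 : FreeGroupRing n) else 0), FreeGroup.of j⟩

/-- The `i`-th Fox derivative `∂_i : F(n) → ℤF`, characterized by `∂_i(x_j) = δ_{ij}`
and `∂_i(uv) = ∂_i(u) + u·∂_i(v)`. -/
noncomputable def foxDeriv {n : ℕ} (i : Fin n) (w : FreeGroup (Fin n)) : FreeGroupRing n :=
  Multiplicative.toAdd (foxHom i w).left

/-- The `ℤ`-linear extension of the Fox derivative to the group ring `ℤF`. -/
noncomputable def foxDerivLin {n : ℕ} (i : Fin n) : FreeGroupRing n →ₗ[ℤ] FreeGroupRing n :=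
  Finsupp.lift (FreeGroupRing n) ℤ (FreeGroup (Fin n)) (foxDeriv i) ∘ₗ
    (MonoidAlgebra.coeffLinearEquiv ℤ).toLinearMap

/-- The augmentation map `ε : ℤF → ℤ`, sending every group element to `1`. -/
noncomputable def augmentation (n : ℕ) : FreeGroupRing n →ₐ[ℤ] ℤ :=
  MonoidAlgebra.lift ℤ ℤ (FreeGroup (Fin n)) 1

/-- Iterated Fox derivatives `∂_{i₁} ∘ ⋯ ∘ ∂_{i_k}` (applied right-to-left). -/
noncomputable def foxIter {n : ℕ} : List (Fin n) → FreeGroupRing n → FreeGroupRing n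
  | [], a => a
  | i :: I, a => foxDerivLin i (foxIter I a)

/-- The composite `ε_I = ε ∘ ∂_{i₁} ∘ ⋯ ∘ ∂_{i_k}` applied to a group element. -/
noncomputable def epsFox {n : ℕ} (I : List (Fin n)) (w : FreeGroup (Fin n)) : ℤ :=
  augmentation n (foxIter I (MonoidAlgebra.of ℤ (FreeGroup (Fin n)) w))

/-! The Leibniz rule `∂ᵢ(ab) = ∂ᵢ(a) ε(b) + a ∂ᵢ(b)` shows that each Fox derivative maps
`Δᵐ⁺¹` into `Δᵐ`, where `Δ = ker ε`; hence `ε_I` vanishes on `Δ^(|I|+1)`. Since `[g, h] - 1`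
lies in `Δᵃ⁺ᵇ` when `g - 1 ∈ Δᵃ` and `h - 1 ∈ Δᵇ`, every `u ∈ F_q` has `u - 1 ∈ Δ^q`.
Writing `uv + 1 = u + v + (u - 1)(v - 1)`, the cross term lies in `Δ^(q+1)` and is killed by
`ε_I`, while `ε_I(1) = 0` because `I` is nonempty. -/

section FoxCalculus

variable {n : ℕ}

@[simp]
lemma augmentation_of (g : FreeGroup (Fin n)) :
    augmentation n (MonoidAlgebra.of ℤ (FreeGroup (Fin n)) g) = 1 := by
  simp [augmentation]

lemma foxHom_right (i : Fin n) (w : FreeGroup (Fin n)) : (foxHom i w).right = w := by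
  have h : SemidirectProduct.rightHom.comp (foxHom i) = MonoidHom.id (FreeGroup (Fin n)) :=
    FreeGroup.ext_hom _ _ fun a => by simp [foxHom]
  exact DFunLike.congr_fun h w

lemma foxDeriv_mul (i : Fin n) (u v : FreeGroup (Fin n)) :
    foxDeriv i (u * v) =
      foxDeriv i u + MonoidAlgebra.of ℤ (FreeGroup (Fin n)) u * foxDeriv i v := by
  rw [foxDeriv, map_mul, SemidirectProduct.mul_left, foxHom_right]
  rfl

lemma foxDerivLin_of (i : Fin n) (w : FreeGroup (Fin n)) :
    foxDerivLin i (MonoidAlgebra.of ℤ (FreeGroup (Fin n)) w) = foxDeriv i w := by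
  simp [foxDerivLin, MonoidAlgebra.of_apply]

lemma foxDerivLin_one (i : Fin n) : foxDerivLin i 1 = 0 := by
  have h := foxDeriv_mul i 1 1
  rw [mul_one, map_one, one_mul, left_eq_add] at h
  rw [← map_one (MonoidAlgebra.of ℤ (FreeGroup (Fin n))), foxDerivLin_of, h]

lemma foxDerivLin_mul (i : Fin n) (a b : FreeGroupRing n) :
    foxDerivLin i (a * b) = augmentation n b • foxDerivLin i a + a * foxDerivLin i b := by
  induction a using MonoidAlgebra.induction_on with
  | of g =>
    induction b using MonoidAlgebra.induction_on with
    | of h =>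
      rw [← map_mul, foxDerivLin_of, foxDerivLin_of, foxDerivLin_of, foxDeriv_mul,
        augmentation_of, one_smul]
    | add b₁ b₂ h₁ h₂ =>
      rw [mul_add, map_add, h₁, h₂, map_add, map_add, add_smul, mul_add]
      abel
    | smul r b hb =>
      rw [mul_smul_comm, map_smul, hb, smul_add, map_smul, map_smul, smul_eq_mul, mul_smul,
        mul_smul_comm]
  | add a₁ a₂ h₁ h₂ =>
    rw [add_mul, map_add, h₁, h₂, map_add, add_mul, smul_add]
    abel
  | smul r a ha =>
    rw [smul_mul_assoc, map_smul, ha, map_smul, smul_add, smul_mul_assoc, smul_comm]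

lemma foxIter_add (J : List (Fin n)) (a b : FreeGroupRing n) :
    foxIter J (a + b) = foxIter J a + foxIter J b := by
  induction J with
  | nil => rfl
  | cons i J ih => simp only [foxIter, ih, map_add]

lemma foxIter_one_of_ne_nil {J : List (Fin n)} (hJ : J ≠ []) :
    foxIter J (1 : FreeGroupRing n) = 0 := by
  obtain ⟨i, J, rfl⟩ := List.exists_cons_of_ne_nil hJ
  clear hJ
  induction J generalizing i with
  | nil => exact foxDerivLin_one i
  | cons j J ih => simp only [foxIter] at ih ⊢; rw [ih j, map_zero]

end FoxCalculus

open scoped commutatorElement in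
/-- This form exhibits `⁅p, q⁆ - 1 ∈ Δᵃ⁺ᵇ` whenever `p - 1 ∈ Δᵃ` and `q - 1 ∈ Δᵇ`. -/
lemma MonoidAlgebra.of_commutatorElement_sub_one {k G : Type*} [CommRing k] [Group G]
    (p q : G) :
    MonoidAlgebra.of k G ⁅p, q⁆ - 1 =
      ((MonoidAlgebra.of k G p - 1) * (MonoidAlgebra.of k G q - 1) -
        (MonoidAlgebra.of k G q - 1) * (MonoidAlgebra.of k G p - 1)) *
        MonoidAlgebra.of k G (p⁻¹ * q⁻¹) := by
  have hqp : MonoidAlgebra.of k G q * MonoidAlgebra.of k G p *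
      MonoidAlgebra.of k G (p⁻¹ * q⁻¹) = 1 := by
    rw [← map_mul, ← map_mul, show q * p * (p⁻¹ * q⁻¹) = 1 by group, map_one]
  calc MonoidAlgebra.of k G ⁅p, q⁆ - 1
      = MonoidAlgebra.of k G p * MonoidAlgebra.of k G q *
            MonoidAlgebra.of k G (p⁻¹ * q⁻¹) -
          MonoidAlgebra.of k G q * MonoidAlgebra.of k G p *
            MonoidAlgebra.of k G (p⁻¹ * q⁻¹) := by
        rw [hqp, ← map_mul, ← map_mul, commutatorElement_def, mul_assoc (p * q)]
    _ = _ := by noncomm_ring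

section AugmentationIdeal

variable {n : ℕ}

noncomputable abbrev augIdeal (n : ℕ) : Ideal (FreeGroupRing n) :=
  RingHom.ker (augmentation n)

lemma mem_augIdeal {z : FreeGroupRing n} : z ∈ augIdeal n ↔ augmentation n z = 0 :=
  RingHom.mem_ker

lemma of_sub_one_mem_augIdeal (g : FreeGroup (Fin n)) :
    MonoidAlgebra.of ℤ (FreeGroup (Fin n)) g - 1 ∈ augIdeal n := by
  rw [mem_augIdeal, map_sub, augmentation_of, map_one, sub_self]

lemma foxDerivLin_mem_augIdeal_pow (i : Fin n) {m : ℕ} {z : FreeGroupRing n}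
    (hz : z ∈ augIdeal n ^ (m + 1)) : foxDerivLin i z ∈ augIdeal n ^ m := by
  rw [Submodule.pow_succ] at hz
  refine Submodule.mul_induction_on hz (fun x hx y hy => ?_)
    (fun x y hx hy => by rw [map_add]; exact add_mem hx hy)
  rw [foxDerivLin_mul, mem_augIdeal.mp hy, zero_smul, zero_add]
  exact Ideal.mul_mem_right _ _ hx

lemma foxIter_mem_augIdeal_pow (J : List (Fin n)) {m : ℕ} {z : FreeGroupRing n}
    (hz : z ∈ augIdeal n ^ (m + J.length)) : foxIter J z ∈ augIdeal n ^ m := by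
  induction J generalizing m with
  | nil => exact hz
  | cons i J ih =>
    refine foxDerivLin_mem_augIdeal_pow i (ih ?_)
    rwa [List.length_cons, ← add_assoc, add_right_comm] at hz

lemma augmentation_foxIter_eq_zero_of_mem {J : List (Fin n)} {z : FreeGroupRing n}
    (hz : z ∈ augIdeal n ^ (J.length + 1)) : augmentation n (foxIter J z) = 0 :=
  mem_augIdeal.mp <|
    Submodule.pow_one (augIdeal n) ▸ foxIter_mem_augIdeal_pow J (by rwa [add_comm])

end AugmentationIdeal

section DimensionSubgroup

variable {n : ℕ}

/-- The `m`-th dimension subgroup `{g | g - 1 ∈ Δᵐ}`, as the kernel of `F → (ℤF ⧸ Δᵐ)ˣ`. -/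
noncomputable def dimensionSubgroup (n m : ℕ) : Subgroup (FreeGroup (Fin n)) :=
  ((Units.map (Ideal.Quotient.mk (augIdeal n ^ m)).toMonoidHom).comp
    (MonoidAlgebra.of ℤ (FreeGroup (Fin n))).toHomUnits).ker

lemma mem_dimensionSubgroup {m : ℕ} {g : FreeGroup (Fin n)} :
    g ∈ dimensionSubgroup n m ↔
      MonoidAlgebra.of ℤ (FreeGroup (Fin n)) g - 1 ∈ augIdeal n ^ m := by
  rw [dimensionSubgroup, MonoidHom.mem_ker, Units.ext_iff]
  exact Ideal.Quotient.eq

open scoped commutatorElement in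
lemma lowerCentralSeries_le_dimensionSubgroup (k : ℕ) :
    (⊤ : Subgroup (FreeGroup (Fin n))).lowerCentralSeries k ≤ dimensionSubgroup n (k + 1) := by
  induction k with
  | zero =>
    exact fun g _ => mem_dimensionSubgroup.mpr <| (Submodule.pow_one (augIdeal n)).symm ▸
      of_sub_one_mem_augIdeal g
  | succ k ih =>
    rw [Subgroup.lowerCentralSeries_succ, Subgroup.commutator_le]
    intro p hp q _
    have hp' := mem_dimensionSubgroup.mp (ih hp)
    have hq' := of_sub_one_mem_augIdeal q
    rw [mem_dimensionSubgroup, MonoidAlgebra.of_commutatorElement_sub_one]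
    refine Ideal.mul_mem_right _ _ (sub_mem ?_ ?_)
    · rw [Submodule.pow_succ]
      exact Ideal.mul_mem_mul hp' hq'
    · rw [Ideal.IsTwoSided.pow_succ]
      exact Ideal.mul_mem_mul hq' hp'

end DimensionSubgroup

theorem epsFox_mul_general {n : ℕ} (q : ℕ) (hq : 1 ≤ q)
    (I : List (Fin n)) (hlen : I.length = q)
    (u v : FreeGroup (Fin n))
    (hu : u ∈ (⊤ : Subgroup (FreeGroup (Fin n))).lowerCentralSeries (q - 1)) :
    epsFox I (u * v) = epsFox I u + epsFox I v := by
  set P := MonoidAlgebra.of ℤ (FreeGroup (Fin n)) u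
  set Q := MonoidAlgebra.of ℤ (FreeGroup (Fin n)) v
  have hI : I ≠ [] := List.ne_nil_of_length_pos (by omega)
  have hcross : (P - 1) * (Q - 1) ∈ augIdeal n ^ (I.length + 1) := by
    rw [Submodule.pow_succ, hlen]
    refine Ideal.mul_mem_mul ?_ (of_sub_one_mem_augIdeal v)
    simpa only [Nat.sub_add_cancel hq] using
      mem_dimensionSubgroup.mp (lowerCentralSeries_le_dimensionSubgroup (q - 1) hu)
  have hsplit : P * Q + 1 = P + Q + (P - 1) * (Q - 1) := by noncomm_ring
  have h := congrArg (fun z => augmentation n (foxIter I z)) hsplit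
  simp only [foxIter_add, map_add, foxIter_one_of_ne_nil hI,
    augmentation_foxIter_eq_zero_of_mem hcross, add_zero] at h
  simpa only [epsFox, map_mul] using h

/-- Let `u, v` be elements of the `q`-th lower central series term `F_q` of the free
group (`F₁ = F`, so `F_q = lowerCentralSeries F (q-1)`), and let `I` be a multi-index
of length `q`.  Then `ε_I(uv) = ε_I(u) + ε_I(v)`. -/
theorem epsFox_mul {n : ℕ} (q : ℕ) (hq : 1 ≤ q)
    (I : List (Fin n)) (hlen : I.length = q)
    (u v : FreeGroup (Fin n))
    (hu : u ∈ (⊤ : Subgroup (FreeGroup (Fin n))).lowerCentralSeries (q - 1))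
    (hv : v ∈ (⊤ : Subgroup (FreeGroup (Fin n))).lowerCentralSeries (q - 1)) :
    epsFox I (u * v) = epsFox I u + epsFox I v :=
  epsFox_mul_general q hq I hlen u v hu
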